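/- The number of fixed points of the bit-reversal permutation π_n on [2^n] is 2^⌈n/2⌉, and the excedance number (number of j with π_n(j)>j) is (2^n − 2^⌈n/2⌉)/2. Consequently, −∑_{j=0}^{k−1} ⌊(j−π_n(j))/k⌋ = (k − 2^⌈n/2⌉)/2 where k=2^n. -/

import Mathlib

/-- The bit-reversal permutation on `n` bits: reverses the binary digits of `j`. -/
def bitrev (n j : ℕ) : ℕ := ∑ i ∈ Finset.range n, (j / 2 ^ i % 2) * 2 ^ (n - 1 - i)

/-!
The map `bitrev n` is an involution of `[0, 2^n)`, so it exchanges excedances with deficiencies and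
`2 · #excedances + #fixed points = 2^n`. Writing `j = a + 2 (m + 2^n b)` with bits `a, b`,
`bitrev (n + 2) j = b + 2 · bitrev n m + 2^(n+1) a`, so the fixed points of `bitrev (n + 2)` are
those with `a = b` and `m` fixed by `bitrev n`: their number doubles every two steps. Finally
`⌊(j - π j) / k⌋` is `-1` at an excedance and `0` elsewhere.
-/

open Finset

theorem two_mul_card_filter_lt_add_card_filter_eq {α : Type*} [LinearOrder α]
    (s : Finset α) (f : α → α) (hf : ∀ x ∈ s, f x ∈ s) (hff : ∀ x ∈ s, f (f x) = x) :
    2 * #{x ∈ s | x < f x} + #{x ∈ s | f x = x} = #s := by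
  have hswap : #{x ∈ s | x < f x} = #{x ∈ s | f x < x} := by
    refine card_nbij' f f ?_ ?_ ?_ ?_ <;> intro x hx <;>
      simp only [coe_filter, Set.mem_ofPred_eq] at hx ⊢
    · exact ⟨hf x hx.1, by rw [hff x hx.1]; exact hx.2⟩
    · exact ⟨hf x hx.1, by rw [hff x hx.1]; exact hx.2⟩
    · exact hff x hx.1
    · exact hff x hx.1
  have htrichotomy : ∀ x ∈ s, (if x < f x then 1 else 0) + (if f x < x then 1 else 0)
      + (if f x = x then 1 else 0) = 1 := by
    intro x _
    rcases lt_trichotomy x (f x) with h | h | h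
    · simp [h, h.not_gt, h.ne']
    · simp [← h]
    · simp [h, h.not_gt, h.ne]
  rw [two_mul]
  nth_rw 2 [hswap]
  rw [card_filter, card_filter, card_filter, ← sum_add_distrib, ← sum_add_distrib,
    sum_congr rfl htrichotomy, card_eq_sum_ones]

theorem bitrev_succ (n j : ℕ) : bitrev (n + 1) j = j % 2 * 2 ^ n + bitrev n (j / 2) := by
  rw [bitrev, sum_range_succ', add_comm, bitrev]
  congr 1
  · simp
  · refine sum_congr rfl fun i _ => ?_
    rw [pow_succ', ← Nat.div_div_eq_div_mul]
    congr 2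
    omega

theorem bitrev_succ' (n j : ℕ) : bitrev (n + 1) j = 2 * bitrev n (j % 2 ^ n) + j / 2 ^ n % 2 := by
  rw [bitrev, sum_range_succ, bitrev, mul_sum]
  congr 1
  · refine sum_congr rfl fun i hi => ?_
    have hi : i < n := mem_range.1 hi
    rw [show 2 ^ n = 2 ^ i * 2 ^ (n - i) by rw [← pow_add, Nat.add_sub_cancel' hi.le],
      Nat.mod_mul_right_div_self,
      Nat.mod_mod_of_dvd _ (dvd_pow_self 2 (by omega)), show n + 1 - 1 - i = n - 1 - i + 1 by omega,
      pow_succ]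
    ring
  · simp

theorem bitrev_lt (n j : ℕ) : bitrev n j < 2 ^ n := by
  induction n generalizing j with
  | zero => simp [bitrev]
  | succ n ih =>
    have := ih (j / 2)
    rw [bitrev_succ, pow_succ]
    rcases Nat.mod_two_eq_zero_or_one j with h | h <;> rw [h] <;> omega

theorem bitrev_succ_bit {a : ℕ} (n m : ℕ) (ha : a < 2) :
    bitrev (n + 1) (a + 2 * m) = bitrev n m + 2 ^ n * a := by
  rw [bitrev_succ, show (a + 2 * m) % 2 = a by omega, show (a + 2 * m) / 2 = m by omega]
  ring

theorem bitrev_succ_add_two_pow {m b : ℕ} (n : ℕ) (hm : m < 2 ^ n) (hb : b < 2) :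
    bitrev (n + 1) (m + 2 ^ n * b) = 2 * bitrev n m + b := by
  rw [bitrev_succ', Nat.add_mul_mod_self_left, Nat.mod_eq_of_lt hm,
    Nat.add_mul_div_left _ _ (by positivity), Nat.div_eq_of_lt hm, zero_add, Nat.mod_eq_of_lt hb]

theorem bitrev_bitrev {n j : ℕ} (hj : j < 2 ^ n) : bitrev n (bitrev n j) = j := by
  induction n generalizing j with
  | zero => simp_all [bitrev]
  | succ n ih =>
    obtain ⟨a, m, ha, hm, rfl⟩ : ∃ a m, a < 2 ∧ m < 2 ^ n ∧ j = a + 2 * m :=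
      ⟨j % 2, j / 2, Nat.mod_lt _ two_pos, by rw [pow_succ] at hj; omega, by omega⟩
    rw [bitrev_succ_bit n m ha, bitrev_succ_add_two_pow n (bitrev_lt n m) ha, ih hm, add_comm]

theorem bitrev_add_two {a m b : ℕ} (n : ℕ) (ha : a < 2) (hm : m < 2 ^ n) (hb : b < 2) :
    bitrev (n + 2) (a + 2 * (m + 2 ^ n * b)) = 2 * bitrev n m + b + 2 ^ (n + 1) * a := by
  rw [bitrev_succ_bit (n + 1) _ ha, bitrev_succ_add_two_pow n hm hb]

theorem bitrev_add_two_eq_self_iff {a m b : ℕ} (n : ℕ) (ha : a < 2) (hm : m < 2 ^ n) (hb : b < 2) :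
    bitrev (n + 2) (a + 2 * (m + 2 ^ n * b)) = a + 2 * (m + 2 ^ n * b) ↔
      a = b ∧ bitrev n m = m := by
  have := bitrev_lt n m
  rw [bitrev_add_two n ha hm hb, pow_succ]
  interval_cases a <;> interval_cases b <;> omega

theorem exists_eq_low_mid_high {n j : ℕ} (hj : j < 2 ^ (n + 2)) :
    ∃ a m b, a < 2 ∧ m < 2 ^ n ∧ b < 2 ∧ j = a + 2 * (m + 2 ^ n * b) := by
  refine ⟨j % 2, j / 2 % 2 ^ n, j / 2 / 2 ^ n, Nat.mod_lt _ two_pos,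
    Nat.mod_lt _ (by positivity), ?_, ?_⟩
  · rw [Nat.div_lt_iff_lt_mul (by positivity)]
    rw [pow_add] at hj
    omega
  · rw [Nat.mod_add_div]
    omega

theorem card_filter_bitrev_eq_self_add_two (n : ℕ) :
    #{j ∈ range (2 ^ (n + 2)) | bitrev (n + 2) j = j} =
      2 * #{m ∈ range (2 ^ n) | bitrev n m = m} := by
  have himage : {j ∈ range (2 ^ (n + 2)) | bitrev (n + 2) j = j} =
      (range 2 ×ˢ {m ∈ range (2 ^ n) | bitrev n m = m}).image
        (fun p => p.1 + 2 * (p.2 + 2 ^ n * p.1)) := by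
    ext j
    simp only [mem_filter, mem_range, mem_image, mem_product, Prod.exists]
    constructor
    · rintro ⟨hj, hfix⟩
      obtain ⟨a, m, b, ha, hm, hb, rfl⟩ := exists_eq_low_mid_high hj
      obtain ⟨rfl, hmfix⟩ := (bitrev_add_two_eq_self_iff n ha hm hb).1 hfix
      exact ⟨a, m, ⟨ha, hm, hmfix⟩, rfl⟩
    · rintro ⟨a, m, ⟨ha, hm, hmfix⟩, rfl⟩
      refine ⟨?_, (bitrev_add_two_eq_self_iff n ha hm ha).2 ⟨rfl, hmfix⟩⟩
      rw [pow_add, pow_two]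
      interval_cases a <;> omega
  rw [himage, card_image_of_injOn, card_product, card_range]
  rintro ⟨a, m⟩ hp ⟨a', m'⟩ hp' heq
  simp only [coe_product, coe_range, coe_filter, Set.mem_prod, Set.mem_Iio, Set.mem_ofPred_eq,
    mem_range] at hp hp' heq
  obtain ⟨ha, hm, -⟩ := hp
  obtain ⟨ha', hm', -⟩ := hp'
  rw [Prod.mk.injEq]
  interval_cases a <;> interval_cases a' <;> omega

theorem card_filter_bitrev_eq_self (n : ℕ) :
    #{j ∈ range (2 ^ n) | bitrev n j = j} = 2 ^ ((n + 1) / 2) := by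
  induction n using Nat.twoStepInduction with
  | zero => decide
  | one => decide
  | more n ih _ =>
    rw [card_filter_bitrev_eq_self_add_two, ih, show (n + 2 + 1) / 2 = (n + 1) / 2 + 1 by omega,
      pow_succ, mul_comm]

theorem two_mul_card_filter_lt_bitrev_add_card_filter_bitrev_eq (n : ℕ) :
    2 * #{j ∈ range (2 ^ n) | j < bitrev n j} + #{j ∈ range (2 ^ n) | bitrev n j = j} = 2 ^ n := by
  simpa using two_mul_card_filter_lt_add_card_filter_eq (range (2 ^ n)) (bitrev n)
    (fun j _ => mem_range.2 (bitrev_lt n j)) (fun j hj => bitrev_bitrev (mem_range.1 hj))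

theorem Int.fdiv_sub_eq_ite {x y k : ℤ} (hx₀ : 0 ≤ x) (hxk : x < k) (hy₀ : 0 ≤ y) (hyk : y < k) :
    Int.fdiv (x - y) k = if x < y then -1 else 0 := by
  rw [Int.fdiv_eq_ediv_of_nonneg _ (by omega)]
  split_ifs <;> rw [Int.ediv_eq_iff_of_pos (by omega)] <;> omega

theorem sum_fdiv_sub_bitrev (n : ℕ) :
    ∑ j ∈ range (2 ^ n), Int.fdiv ((j : ℤ) - (bitrev n j : ℤ)) ((2 ^ n : ℕ) : ℤ)
      = -#{j ∈ range (2 ^ n) | j < bitrev n j} := by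
  rw [sum_congr rfl fun j hj => Int.fdiv_sub_eq_ite (by positivity)
    (Int.ofNat_lt.2 (mem_range.1 hj)) (by positivity) (Int.ofNat_lt.2 (bitrev_lt n j))]
  simp [sum_ite]

theorem bitrev_fixed_points_excedances (n k : ℕ) (hk : k = 2 ^ n) :
    (Finset.filter (fun j => bitrev n j = j) (Finset.range k)).card = 2 ^ ((n + 1) / 2)
    ∧ (Finset.filter (fun j => j < bitrev n j) (Finset.range k)).card
        = (k - 2 ^ ((n + 1) / 2)) / 2
    ∧ -∑ j ∈ Finset.range k, Int.fdiv ((j : ℤ) - (bitrev n j : ℤ)) (k : ℤ)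
        = ((k : ℤ) - 2 ^ ((n + 1) / 2)) / 2 := by
  subst hk
  have hfix := card_filter_bitrev_eq_self n
  have hcount := two_mul_card_filter_lt_bitrev_add_card_filter_bitrev_eq n
  rw [hfix] at hcount
  have hcount_int :
      2 * (#{j ∈ range (2 ^ n) | j < bitrev n j} : ℤ) + 2 ^ ((n + 1) / 2) = 2 ^ n := by
    exact_mod_cast hcount
  refine ⟨hfix, by omega, ?_⟩
  rw [sum_fdiv_sub_bitrev, neg_neg]
  push_cast
  omega
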